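/- arXiv:2211.02815 — 4 statements merged into one kernel-verified Lean document; each statement's English description precedes it below -/
import Mathlib

section
/- Let f : ℕ → ℕ be nondecreasing with f(2^{n+1}) ≤ f(2^n)^2 for all n ≥ 0 and f(1) ≥ 2. Define W(1) = X a set of size f(1), and inductively choose C(2^n) ⊆ W(2^n) with |C(2^n)| = ⌈f(2^{n+1})/f(2^n)⌉ and W(2^{n+1}) = W(2^n)·C(2^n) (concatenation of words). Then for all m ≥ 0, f(2^m) ≤ |W(2^m)| ≤ 2^m · f(2^m), and if additionally f(2^k) divides f(2^{k+1}) for all k, then |W(2^m)| = f(2^m). -/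
private lemma ceil_lb (a b : ℕ) (hb : 0 < b) : a ≤ b * ((a + b - 1) / b) := by
  have h1 := Nat.div_add_mod (a + b - 1) b
  have h2 := Nat.mod_lt (a + b - 1) hb
  omega

private lemma ceil_ub (a b : ℕ) (hb : 0 < b) (hba : b ≤ a) (ha : 1 ≤ a) :
    b * ((a + b - 1) / b) ≤ 2 * a := by
  have h1 := Nat.div_add_mod (a + b - 1) b
  have h2 := Nat.mod_lt (a + b - 1) hb
  omega

private lemma ceil_dvd (a b : ℕ) (hb : 0 < b) (h : b ∣ a) :
    b * ((a + b - 1) / b) = a := by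
  obtain ⟨c, rfl⟩ := h
  have : b * c + b - 1 = (b - 1) + b * c := by omega
  rw [this, Nat.add_mul_div_left _ _ hb, Nat.div_eq_of_lt (by omega)]
  ring

/-- the Smoktunowicz–Bartholdi word-set construction.
`W n` plays the role of `W(2^n)` and `C n` of `C(2^n)`; words are lists over the
alphabet `Fin (f 1)`. -/
theorem stmt_7 (f : ℕ → ℕ) (hfmono : Monotone f)
    (hsq : ∀ n : ℕ, f (2 ^ (n + 1)) ≤ f (2 ^ n) ^ 2) (hf1 : 2 ≤ f 1)
    (W C : ℕ → Finset (List (Fin (f 1))))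
    (hW0card : (W 0).card = f 1)
    (hW0len : ∀ w ∈ W 0, w.length = 1)
    (hCsub : ∀ n, C n ⊆ W n)
    (hCcard : ∀ n, (C n).card = (f (2 ^ (n + 1)) + f (2 ^ n) - 1) / f (2 ^ n))
    (hWsucc : ∀ n, W (n + 1) = ((W n) ×ˢ (C n)).image fun p => p.1 ++ p.2) :
    (∀ m : ℕ, f (2 ^ m) ≤ (W m).card ∧ (W m).card ≤ 2 ^ m * f (2 ^ m)) ∧
      ((∀ k : ℕ, f (2 ^ k) ∣ f (2 ^ (k + 1))) → ∀ m : ℕ, (W m).card = f (2 ^ m)) := by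
  have fpos : ∀ n : ℕ, 0 < f (2 ^ n) := fun n => by
    have : f (2 ^ 0) ≤ f (2 ^ n) := hfmono (Nat.pow_le_pow_right (by norm_num) (Nat.zero_le n))
    simpa using lt_of_lt_of_le (by omega : (0:ℕ) < f 1) (by simpa using this)
  -- lengths
  have hlen : ∀ n, ∀ w ∈ W n, w.length = 2 ^ n := by
    intro n
    induction n with
    | zero => simpa using hW0len
    | succ n ih =>
      intro w hw
      rw [hWsucc n] at hw
      obtain ⟨p, hp, rfl⟩ := Finset.mem_image.mp hw
      rw [Finset.mem_product] at hp
      have h1 := ih p.1 hp.1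
      have h2 := ih p.2 (hCsub n hp.2)
      simp [List.length_append, h1, h2, pow_succ]
      ring
  -- card recursion
  have hcard : ∀ n, (W (n + 1)).card = (W n).card * (C n).card := by
    intro n
    rw [hWsucc n, Finset.card_image_of_injOn, Finset.card_product]
    intro p hp q hq h
    rw [Finset.mem_coe, Finset.mem_product] at hp hq
    have hl : p.1.length = q.1.length := by
      rw [hlen n p.1 hp.1, hlen n q.1 hq.1]
    obtain ⟨h1, h2⟩ := List.append_inj h hl
    exact Prod.ext h1 h2
  have hmonon : ∀ n : ℕ, f (2 ^ n) ≤ f (2 ^ (n + 1)) :=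
    fun n => hfmono (Nat.pow_le_pow_right (by norm_num) (Nat.le_succ n))
  constructor
  · intro m
    induction m with
    | zero => simp [hW0card]
    | succ n ih =>
      obtain ⟨ihl, ihu⟩ := ih
      rw [hcard n, hCcard n]
      set a := f (2 ^ (n + 1))
      set b := f (2 ^ n)
      have hb : 0 < b := fpos n
      have hba : b ≤ a := hmonon n
      have ha : 1 ≤ a := lt_of_lt_of_le hb hba
      constructor
      · calc a ≤ b * ((a + b - 1) / b) := ceil_lb a b hb
          _ ≤ (W n).card * ((a + b - 1) / b) := Nat.mul_le_mul_right _ ihl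
      · calc (W n).card * ((a + b - 1) / b) ≤ (2 ^ n * b) * ((a + b - 1) / b) :=
              Nat.mul_le_mul_right _ ihu
          _ = 2 ^ n * (b * ((a + b - 1) / b)) := by ring
          _ ≤ 2 ^ n * (2 * a) := Nat.mul_le_mul_left _ (ceil_ub a b hb hba ha)
          _ = 2 ^ (n + 1) * a := by ring
  · intro hdvd m
    induction m with
    | zero => simpa using hW0card
    | succ n ih =>
      rw [hcard n, hCcard n, ih]
      exact ceil_dvd _ _ (fpos n) (hdvd n)
end

section
/- Let f : ℕ → ℕ be nondecreasing with f(2^{n+1}) ≤ f(2^n)^2, and let h(n) count the factors of length at most n of the set of right-infinite words S = W(1)C(1)C(2)C(4)C(8)⋯ constructed from f as in the Smoktunowicz–Bartholdi construction. Then there exist constants C, D > 0 with f(n) ≤ h(2n) and h(n) ≤ C·n^3·f(D·n) for all n; moreover if f(2^k) divides f(2^{k+1}) for all k then h(n) ≤ C·n^2·f(D·n). -/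
/-!
Words of `W(2^n)` have length `2^n`, and concatenation `W(2^n) × C(2^n) → W(2^{n+1})` is
injective, so `#W(2^{n+1}) = #W(2^n) · ⌈f(2^{n+1})/f(2^n)⌉`; by induction
`f(2^n) ≤ #W(2^n) ≤ 2^n f(2^n)`, with `#W(2^n) = f(2^n)` under the divisibility hypothesis.
Every word of `W(2^m)` is a prefix of a word of `S` (continue it by arbitrary blocks from the
`C(2^k)`, `k ≥ m`), which gives `f(n) ≤ h(2n)`. Conversely, if `n ≤ 2^m ≤ 2n`, every factor
of length at most `n` extends to a factor of length `2^m`, so by the granted lemma it is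
determined by a word of `W(2^m)C(2^m) ∪ C(2^m)W(2^m)`, a starting position and a length; hence
`h(n) ≤ 2 #W(2^{m+1}) · O(n^2)`.
-/

open Finset

variable {α : Type*}

theorem List.ofFn_add_eq_append (g : ℕ → α) (a b : ℕ) :
    (List.ofFn fun i : Fin (a + b) => g i) =
      (List.ofFn fun i : Fin a => g i) ++ List.ofFn fun i : Fin b => g (a + i) := by
  simp [List.ofFn_add]

theorem List.ofFn_prefix_ofFn (g : ℕ → α) {a b : ℕ} (h : a ≤ b) :
    (List.ofFn fun i : Fin a => g i) <+: List.ofFn fun i : Fin b => g i := by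
  obtain ⟨c, rfl⟩ := Nat.exists_eq_add_of_le h
  rw [List.ofFn_add_eq_append]
  exact List.prefix_append _ _

theorem List.ofFn_two_pow_succ (g : ℕ → α) (m : ℕ) :
    (List.ofFn fun i : Fin (2 ^ (m + 1)) => g i) =
      (List.ofFn fun i : Fin (2 ^ m) => g i) ++
        List.ofFn fun i : Fin (2 ^ m) => g (2 ^ m + i) := by
  rw [← List.ofFn_add_eq_append, pow_succ, mul_two]

theorem List.IsInfix.exists_eq_take_drop {u p : List α} (h : u <:+: p) :
    ∃ s ≤ p.length, u = (p.drop s).take u.length := by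
  obtain ⟨s, t, rfl⟩ := h
  exact ⟨s.length, by simp, by simp⟩

theorem ncard_le_of_forall_infix [DecidableEq α] {A : Set (List α)} (P : Finset (List α))
    {L N : ℕ} (hP : ∀ p ∈ P, p.length ≤ L)
    (hA : ∀ u ∈ A, u.length ≤ N ∧ ∃ p ∈ P, u <:+: p) :
    A.ncard ≤ #P * ((L + 1) * (N + 1)) := by
  let T := (P ×ˢ (range (L + 1) ×ˢ range (N + 1))).image fun q => (q.1.drop q.2.1).take q.2.2
  have hAT : A ⊆ T := by
    intro u hu
    obtain ⟨hu, p, hp, hup⟩ := hA u hu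
    obtain ⟨s, hs, hus⟩ := hup.exists_eq_take_drop
    refine mem_coe.2 (mem_image.2 ⟨(p, s, u.length), ?_, hus.symm⟩)
    simp only [mem_product, mem_range]
    exact ⟨hp, by linarith [hP p hp], by omega⟩
  calc A.ncard ≤ (T : Set (List α)).ncard := Set.ncard_le_ncard hAT T.finite_toSet
    _ = #T := Set.ncard_coe_finset T
    _ ≤ _ := card_image_le.trans (by simp [card_product])

theorem Nat.mul_ceilDiv_le_two_mul {a b : ℕ} (h : a ≤ b) : a * (b ⌈/⌉ a) ≤ 2 * b := by
  have := Nat.mul_div_le (b + a - 1) a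
  rw [Nat.ceilDiv_eq_add_pred_div]
  omega

theorem Nat.mul_ceilDiv_of_dvd {a b : ℕ} (ha : 0 < a) (h : a ∣ b) : a * (b ⌈/⌉ a) = b := by
  obtain ⟨q, rfl⟩ := h
  exact congrArg (a * ·) (smul_ceilDiv ha q)

theorem Nat.exists_le_two_pow_le_two_mul {n : ℕ} (hn : 1 ≤ n) :
    ∃ m, n ≤ 2 ^ m ∧ 2 ^ m ≤ 2 * n :=
  ⟨Nat.log 2 n + 1, (Nat.lt_pow_succ_log_self one_lt_two n).le,
    by rw [pow_succ, mul_comm]; exact Nat.mul_le_mul_left 2 (Nat.pow_log_le_self 2 (by omega))⟩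

/-- `W n` and `C n` stand for the paper's `W(2^n)` and `C(2^n)`; the `n`-th block of `w` occupies
positions `[2^n, 2^{n+1})`. -/
def blockWords (W C : ℕ → Finset (List α)) : Set (ℕ → α) :=
  {w | ([w 0] ∈ W 0) ∧ ∀ n : ℕ, (List.ofFn fun i : Fin (2 ^ n) => w (2 ^ n + i)) ∈ C n}

def IsFactorOf (S : Set (ℕ → α)) (u : List α) : Prop :=
  ∃ w ∈ S, ∃ k : ℕ, u = List.ofFn fun i : Fin u.length => w (k + i)

theorem isFactorOf_ofFn {S : Set (ℕ → α)} {w : ℕ → α} (hw : w ∈ S) (k L : ℕ) :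
    IsFactorOf S (List.ofFn fun i : Fin L => w (k + i)) :=
  ⟨w, hw, k, by simp⟩

theorem IsFactorOf.exists_prefix {S : Set (ℕ → α)} {u : List α} (hu : IsFactorOf S u)
    {L : ℕ} (hL : u.length ≤ L) : ∃ U, IsFactorOf S U ∧ U.length = L ∧ u <+: U := by
  obtain ⟨w, hw, k, hwk⟩ := hu
  refine ⟨List.ofFn fun i : Fin L => w (k + i), isFactorOf_ofFn hw k L, List.length_ofFn, ?_⟩
  rw [hwk]
  exact List.ofFn_prefix_ofFn (fun i => w (k + i)) hL

structure IsDoublingScheme [DecidableEq α] (W C : ℕ → Finset (List α)) : Prop where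
  length_of_mem_zero : ∀ w ∈ W 0, w.length = 1
  subset : ∀ n, C n ⊆ W n
  succ_eq : ∀ n, W (n + 1) = (W n ×ˢ C n).image fun p => p.1 ++ p.2

namespace IsDoublingScheme

variable [DecidableEq α] {W C : ℕ → Finset (List α)}

theorem length_of_mem (hs : IsDoublingScheme W C) {n : ℕ} {w : List α} (hw : w ∈ W n) :
    w.length = 2 ^ n := by
  induction n generalizing w with
  | zero => exact hs.length_of_mem_zero w hw
  | succ n ih =>
    rw [hs.succ_eq, mem_image] at hw
    obtain ⟨⟨a, b⟩, hab, rfl⟩ := hw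
    rw [mem_product] at hab
    rw [List.length_append, ih hab.1, ih (hs.subset n hab.2), pow_succ, mul_two]

theorem append_mem_succ_iff (hs : IsDoublingScheme W C) {n : ℕ} {x y : List α}
    (hx : x.length = 2 ^ n) : x ++ y ∈ W (n + 1) ↔ x ∈ W n ∧ y ∈ C n := by
  rw [hs.succ_eq, mem_image]
  constructor
  · rintro ⟨⟨a, b⟩, hab, he⟩
    rw [mem_product] at hab
    obtain ⟨rfl, rfl⟩ := List.append_inj he ((hs.length_of_mem hab.1).trans hx.symm)
    exact hab
  · exact fun hxy => ⟨(x, y), mem_product.2 hxy, rfl⟩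

theorem card_succ (hs : IsDoublingScheme W C) (n : ℕ) :
    #(W (n + 1)) = #(W n) * #(C n) := by
  rw [hs.succ_eq, card_image_of_injOn, card_product]
  rintro ⟨a, b⟩ hab ⟨a', b'⟩ hab' he
  simp only [coe_product, Set.mem_prod, mem_coe] at hab hab'
  obtain ⟨rfl, rfl⟩ := List.append_inj he
    ((hs.length_of_mem hab.1).trans (hs.length_of_mem hab'.1).symm)
  rfl

theorem take_mem (hs : IsDoublingScheme W C) {n : ℕ} {w : List α} (hw : w ∈ W n) {k : ℕ}
    (hk : k ≤ n) : w.take (2 ^ k) ∈ W k := by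
  induction n generalizing w with
  | zero => rwa [Nat.le_zero.1 hk, List.take_of_length_le (hs.length_of_mem hw).le]
  | succ n ih =>
    rcases hk.eq_or_lt with rfl | hk
    · rwa [List.take_of_length_le (hs.length_of_mem hw).le]
    rw [hs.succ_eq, mem_image] at hw
    obtain ⟨⟨a, b⟩, hab, rfl⟩ := hw
    rw [mem_product] at hab
    have hka : 2 ^ k ≤ a.length :=
      (hs.length_of_mem hab.1).symm ▸ Nat.pow_le_pow_right two_pos (by omega)
    rw [List.take_append_of_le_length hka]
    exact ih hab.1 (by omega)

theorem le_card (hs : IsDoublingScheme W C) (a : ℕ → ℕ) (h0 : a 0 ≤ #(W 0))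
    (hstep : ∀ n, a (n + 1) ≤ a n * #(C n)) (n : ℕ) : a n ≤ #(W n) := by
  induction n with
  | zero => exact h0
  | succ n ih => exact (hstep n).trans (hs.card_succ n ▸ Nat.mul_le_mul_right _ ih)

theorem card_le (hs : IsDoublingScheme W C) (a : ℕ → ℕ) (h0 : #(W 0) ≤ a 0)
    (hstep : ∀ n, a n * #(C n) ≤ 2 * a (n + 1)) (n : ℕ) : #(W n) ≤ 2 ^ n * a n := by
  induction n with
  | zero => simpa using h0
  | succ n ih =>
    calc #(W (n + 1)) = #(W n) * #(C n) := hs.card_succ n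
      _ ≤ 2 ^ n * (a n * #(C n)) := by rw [← mul_assoc]; exact Nat.mul_le_mul_right _ ih
      _ ≤ 2 ^ n * (2 * a (n + 1)) := Nat.mul_le_mul_left _ (hstep n)
      _ = 2 ^ (n + 1) * a (n + 1) := by ring

theorem card_eq (hs : IsDoublingScheme W C) (a : ℕ → ℕ) (h0 : #(W 0) = a 0)
    (hstep : ∀ n, a n * #(C n) = a (n + 1)) (n : ℕ) : #(W n) = a n := by
  induction n with
  | zero => exact h0
  | succ n ih => rw [hs.card_succ, ih, hstep]

theorem mem_blockWords_iff (hs : IsDoublingScheme W C) {w : ℕ → α} :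
    w ∈ blockWords W C ↔ ∀ m, (List.ofFn fun i : Fin (2 ^ m) => w i) ∈ W m := by
  have hsucc (m : ℕ) : (List.ofFn fun i : Fin (2 ^ (m + 1)) => w i) ∈ W (m + 1) ↔
      (List.ofFn fun i : Fin (2 ^ m) => w i) ∈ W m ∧
        (List.ofFn fun i : Fin (2 ^ m) => w (2 ^ m + i)) ∈ C m := by
    rw [List.ofFn_two_pow_succ]
    exact hs.append_mem_succ_iff List.length_ofFn
  constructor
  · rintro ⟨h0, hblock⟩ m
    induction m with
    | zero => simpa using h0
    | succ m ih => exact (hsucc m).2 ⟨ih, hblock m⟩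
  · intro h
    exact ⟨by simpa using h 0, fun n => ((hsucc n).1 (h (n + 1))).2⟩

theorem exists_mem_blockWords_ofFn_eq (hs : IsDoublingScheme W C) (hC : ∀ n, (C n).Nonempty)
    {m : ℕ} {v : List α} (hv : v ∈ W m) :
    ∃ w ∈ blockWords W C, (List.ofFn fun i : Fin (2 ^ m) => w i) = v := by
  choose c hc using hC
  have hvlen := hs.length_of_mem hv
  obtain ⟨d⟩ : Nonempty α := ⟨v[0]'(hvlen ▸ Nat.two_pow_pos m)⟩
  -- beyond the prefix `v`, the `k`-th block is a fixed word `c k ∈ C k`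
  let w : ℕ → α := fun i =>
    if i < 2 ^ m then v.getD i d else (c (Nat.log 2 i)).getD (i - 2 ^ Nat.log 2 i) d
  have hprefix : (List.ofFn fun i : Fin (2 ^ m) => w i) = v := by
    refine List.ext_getElem (by simp [hvlen]) fun i hi hi' => ?_
    rw [List.length_ofFn] at hi
    simp [w, hi']
  have hblock (k : ℕ) (hk : m ≤ k) :
      (List.ofFn fun i : Fin (2 ^ k) => w (2 ^ k + i)) = c k := by
    have hlen := hs.length_of_mem (hs.subset k (hc k))
    refine List.ext_getElem (by simp [hlen]) fun i hi hi' => ?_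
    rw [List.length_ofFn] at hi
    have hlog : Nat.log 2 (2 ^ k + i) = k :=
      Nat.log_eq_of_pow_le_of_lt_pow (by omega) (by rw [pow_succ]; omega)
    have hge : ¬ 2 ^ k + i < 2 ^ m :=
      not_lt.2 ((Nat.pow_le_pow_right two_pos hk).trans (Nat.le_add_right _ _))
    simp [w, hge, hlog, hi']
  refine ⟨w, hs.mem_blockWords_iff.2 fun k => ?_, hprefix⟩
  rcases le_total k m with hkm | hmk
  · have hpre := List.ofFn_prefix_ofFn w (Nat.pow_le_pow_right two_pos hkm)
    rw [hprefix, List.prefix_iff_eq_take, List.length_ofFn] at hpre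
    exact hpre ▸ hs.take_mem hv hkm
  · induction k, hmk using Nat.le_induction with
    | base => exact hprefix ▸ hv
    | succ k hmk ih =>
      rw [List.ofFn_two_pow_succ, hs.append_mem_succ_iff List.length_ofFn, hblock k hmk]
      exact ⟨ih, hc k⟩

theorem isFactorOf_of_mem (hs : IsDoublingScheme W C) (hC : ∀ n, (C n).Nonempty) {m : ℕ}
    {v : List α} (hv : v ∈ W m) : IsFactorOf (blockWords W C) v := by
  obtain ⟨w, hw, rfl⟩ := hs.exists_mem_blockWords_ofFn_eq hC hv
  simpa using isFactorOf_ofFn hw 0 (2 ^ m)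

theorem card_le_ncard_factors [Finite α] (hs : IsDoublingScheme W C) (hC : ∀ n, (C n).Nonempty)
    {m N : ℕ} (hm : 2 ^ m ≤ N) :
    #(W m) ≤ {u : List α | u.length ≤ N ∧ IsFactorOf (blockWords W C) u}.ncard := by
  rw [← Set.ncard_coe_finset]
  exact Set.ncard_le_ncard
    (fun v hv => ⟨(hs.length_of_mem hv).trans_le hm, hs.isFactorOf_of_mem hC hv⟩)
    ((List.finite_length_le α N).subset fun u hu => hu.1)

theorem ncard_factors_le (hs : IsDoublingScheme W C) {S : Set (ℕ → α)} {m N : ℕ}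
    (hfactor : ∀ u, IsFactorOf S u → u.length = 2 ^ m → ∃ a b : List α,
      ((a ∈ W m ∧ b ∈ C m) ∨ (a ∈ C m ∧ b ∈ W m)) ∧ u <:+: a ++ b)
    (hN : N ≤ 2 ^ m) :
    {u : List α | u.length ≤ N ∧ IsFactorOf S u}.ncard ≤
      2 * #(W (m + 1)) * ((2 ^ (m + 1) + 1) * (N + 1)) := by
  let P := ((W m ×ˢ C m) ∪ (C m ×ˢ W m)).image fun p => p.1 ++ p.2
  have hP : ∀ p ∈ P, p.length ≤ 2 ^ (m + 1) := by
    simp only [P, mem_image, mem_union, mem_product]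
    rintro _ ⟨⟨a, b⟩, ⟨ha, hb⟩ | ⟨ha, hb⟩, rfl⟩
    · simp [hs.length_of_mem ha, hs.length_of_mem (hs.subset m hb), pow_succ, mul_two]
    · simp [hs.length_of_mem (hs.subset m ha), hs.length_of_mem hb, pow_succ, mul_two]
  have hPcard : #P ≤ 2 * #(W (m + 1)) :=
    calc #P ≤ #((W m ×ˢ C m) ∪ (C m ×ˢ W m)) := card_image_le
      _ ≤ #(W m ×ˢ C m) + #(C m ×ˢ W m) := card_union_le _ _
      _ = 2 * #(W (m + 1)) := by rw [card_product, card_product, hs.card_succ]; ring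
  have hfactors : ∀ u ∈ {u : List α | u.length ≤ N ∧ IsFactorOf S u},
      u.length ≤ N ∧ ∃ p ∈ P, u <:+: p := by
    rintro u ⟨hu, hfac⟩
    obtain ⟨U, hU, hUlen, huU⟩ := hfac.exists_prefix (hu.trans hN)
    obtain ⟨a, b, hab, hUab⟩ := hfactor U hU hUlen
    exact ⟨hu, a ++ b, mem_image.2 ⟨(a, b), by simpa [mem_union, mem_product] using hab, rfl⟩,
      huU.isInfix.trans hUab⟩
  exact (ncard_le_of_forall_infix P hP hfactors).trans (Nat.mul_le_mul_right _ hPcard)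

theorem exists_ncard_factors_le (hs : IsDoublingScheme W C) {S : Set (ℕ → α)}
    (hfactor : ∀ m : ℕ, ∀ u, IsFactorOf S u → u.length = 2 ^ m → ∃ a b : List α,
      ((a ∈ W m ∧ b ∈ C m) ∨ (a ∈ C m ∧ b ∈ W m)) ∧ u <:+: a ++ b)
    {n : ℕ} (hn : 1 ≤ n) :
    ∃ m, 2 ^ m ≤ 4 * n ∧
      {u : List α | u.length ≤ n ∧ IsFactorOf S u}.ncard ≤ 20 * n ^ 2 * #(W m) := by
  obtain ⟨m, hnm, hmn⟩ := Nat.exists_le_two_pow_le_two_mul hn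
  refine ⟨m + 1, by rw [pow_succ]; omega, ?_⟩
  calc _ ≤ 2 * #(W (m + 1)) * ((2 ^ (m + 1) + 1) * (n + 1)) :=
        hs.ncard_factors_le (hfactor m) hnm
    _ ≤ 2 * #(W (m + 1)) * (10 * n ^ 2) := Nat.mul_le_mul_left _ (by rw [pow_succ]; nlinarith)
    _ = 20 * n ^ 2 * #(W (m + 1)) := by ring

end IsDoublingScheme

theorem stmt_8_general (f : ℕ → ℕ) (hfmono : Monotone f)
    (hf1 : 2 ≤ f 1)
    (W C : ℕ → Finset (List (Fin (f 1))))
    (hW0card : (W 0).card = f 1)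
    (hW0len : ∀ w ∈ W 0, w.length = 1)
    (hCsub : ∀ n, C n ⊆ W n)
    (hCcard : ∀ n, (C n).card = (f (2 ^ (n + 1)) + f (2 ^ n) - 1) / f (2 ^ n))
    (hWsucc : ∀ n, W (n + 1) = ((W n) ×ˢ (C n)).image fun p => p.1 ++ p.2)
    -- the set `S` of right-infinite words and its factors
    (S : Set (ℕ → Fin (f 1)))
    (hS : S = {w | ([w 0] ∈ W 0) ∧
      ∀ n : ℕ, (List.ofFn fun i : Fin (2 ^ n) => w (2 ^ n + i)) ∈ C n})
    (IsFactor : List (Fin (f 1)) → Prop)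
    (hFac : ∀ u, IsFactor u ↔
      ∃ w ∈ S, ∃ k : ℕ, u = List.ofFn fun i : Fin u.length => w (k + i))
    -- the granted lemma: every factor of length `2^m` is a subword of a word in
    -- `W(2^m)C(2^m) ∪ C(2^m)W(2^m)`
    (hgranted : ∀ m : ℕ, ∀ u, IsFactor u → u.length = 2 ^ m →
      ∃ a b : List (Fin (f 1)),
        ((a ∈ W m ∧ b ∈ C m) ∨ (a ∈ C m ∧ b ∈ W m)) ∧ u <:+: a ++ b)
    (h : ℕ → ℕ)
    (hh : ∀ n, h n = Set.ncard {u : List (Fin (f 1)) | u.length ≤ n ∧ IsFactor u}) :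
    ∃ Cc D : ℕ, 0 < Cc ∧ 0 < D ∧
      (∀ n : ℕ, 1 ≤ n → f n ≤ h (2 * n) ∧ h n ≤ Cc * n ^ 3 * f (D * n)) ∧
      ((∀ k : ℕ, f (2 ^ k) ∣ f (2 ^ (k + 1))) →
        ∀ n : ℕ, 1 ≤ n → h n ≤ Cc * n ^ 2 * f (D * n)) := by
  have hs : IsDoublingScheme W C := ⟨hW0len, hCsub, hWsucc⟩
  obtain rfl : S = blockWords W C := hS
  obtain rfl : IsFactor = IsFactorOf (blockWords W C) := funext fun u => propext (hFac u)
  obtain rfl := funext hh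
  -- `b ⌈/⌉ a` on `ℕ` is by definition `(b + a - 1) / a`
  have hCcard' : ∀ n, #(C n) = f (2 ^ (n + 1)) ⌈/⌉ f (2 ^ n) := hCcard
  have hfpos (k : ℕ) : 0 < f (2 ^ k) := by have := hfmono (Nat.one_le_two_pow (n := k)); omega
  have hfstep (k : ℕ) : f (2 ^ k) ≤ f (2 ^ (k + 1)) :=
    hfmono (Nat.pow_le_pow_right two_pos k.le_succ)
  have hW_ge := hs.le_card (fun n => f (2 ^ n)) (by simp [hW0card])
    fun n => hCcard' n ▸ le_smul_ceilDiv (hfpos n)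
  have hC (n : ℕ) : (C n).Nonempty := by
    refine card_pos.1 (Nat.pos_of_mul_pos_left (a := #(W n)) ?_)
    exact hs.card_succ n ▸ (hfpos (n + 1)).trans_le (hW_ge (n + 1))
  refine ⟨80, 4, by norm_num, by norm_num, fun n hn => ⟨?_, ?_⟩, fun hdvd n hn => ?_⟩
  · obtain ⟨m, hnm, hmn⟩ := Nat.exists_le_two_pow_le_two_mul hn
    exact (hfmono hnm).trans ((hW_ge m).trans (hs.card_le_ncard_factors hC hmn))
  · obtain ⟨m, hm, hcount⟩ := hs.exists_ncard_factors_le hgranted hn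
    have hW_le := hs.card_le (fun n => f (2 ^ n)) (by simp [hW0card])
      (fun n => hCcard' n ▸ Nat.mul_ceilDiv_le_two_mul (hfstep n)) m
    calc _ ≤ 20 * n ^ 2 * #(W m) := hcount
      _ ≤ 20 * n ^ 2 * (4 * n * f (4 * n)) :=
          Nat.mul_le_mul_left _ (hW_le.trans (Nat.mul_le_mul hm (hfmono hm)))
      _ = 80 * n ^ 3 * f (4 * n) := by ring
  · obtain ⟨m, hm, hcount⟩ := hs.exists_ncard_factors_le hgranted hn
    have hW_eq := hs.card_eq (fun n => f (2 ^ n)) (by simp [hW0card])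
      (fun n => hCcard' n ▸ Nat.mul_ceilDiv_of_dvd (hfpos n) (hdvd n)) m
    calc _ ≤ 20 * n ^ 2 * #(W m) := hcount
      _ ≤ 20 * n ^ 2 * f (4 * n) := by rw [hW_eq]; exact Nat.mul_le_mul_left _ (hfmono hm)
      _ ≤ 80 * n ^ 2 * f (4 * n) := by gcongr; norm_num

/-- growth of the factor-counting function of the set of right-infinite
words `S = W(1)C(1)C(2)C(4)⋯` from the Smoktunowicz–Bartholdi construction.
`W n`, `C n` play the roles of `W(2^n)`, `C(2^n)`; an infinite word `w` lies in `S`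
iff its first letter (a length-1 word) lies in `W 0` and, for every `n`, the block of
`w` occupying positions `[2^n, 2^{n+1})` lies in `C n`. -/
theorem stmt_8 (f : ℕ → ℕ) (hfmono : Monotone f)
    (hsq : ∀ n : ℕ, f (2 ^ (n + 1)) ≤ f (2 ^ n) ^ 2) (hf1 : 2 ≤ f 1)
    (W C : ℕ → Finset (List (Fin (f 1))))
    (hW0card : (W 0).card = f 1)
    (hW0len : ∀ w ∈ W 0, w.length = 1)
    (hCsub : ∀ n, C n ⊆ W n)
    (hCcard : ∀ n, (C n).card = (f (2 ^ (n + 1)) + f (2 ^ n) - 1) / f (2 ^ n))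
    (hWsucc : ∀ n, W (n + 1) = ((W n) ×ˢ (C n)).image fun p => p.1 ++ p.2)
    -- the set `S` of right-infinite words and its factors
    (S : Set (ℕ → Fin (f 1)))
    (hS : S = {w | ([w 0] ∈ W 0) ∧
      ∀ n : ℕ, (List.ofFn fun i : Fin (2 ^ n) => w (2 ^ n + i)) ∈ C n})
    (IsFactor : List (Fin (f 1)) → Prop)
    (hFac : ∀ u, IsFactor u ↔
      ∃ w ∈ S, ∃ k : ℕ, u = List.ofFn fun i : Fin u.length => w (k + i))
    -- the granted lemma: every factor of length `2^m` is a subword of a word in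
    -- `W(2^m)C(2^m) ∪ C(2^m)W(2^m)`
    (hgranted : ∀ m : ℕ, ∀ u, IsFactor u → u.length = 2 ^ m →
      ∃ a b : List (Fin (f 1)),
        ((a ∈ W m ∧ b ∈ C m) ∨ (a ∈ C m ∧ b ∈ W m)) ∧ u <:+: a ++ b)
    (h : ℕ → ℕ)
    (hh : ∀ n, h n = Set.ncard {u : List (Fin (f 1)) | u.length ≤ n ∧ IsFactor u}) :
    ∃ Cc D : ℕ, 0 < Cc ∧ 0 < D ∧
      (∀ n : ℕ, 1 ≤ n → f n ≤ h (2 * n) ∧ h n ≤ Cc * n ^ 3 * f (D * n)) ∧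
      ((∀ k : ℕ, f (2 ^ k) ∣ f (2 ^ (k + 1))) →
        ∀ n : ℕ, 1 ≤ n → h n ≤ Cc * n ^ 2 * f (D * n)) :=
  stmt_8_general f hfmono hf1 W C hW0card hW0len hCsub hCcard hWsucc S hS IsFactor hFac hgranted h
    hh
end

section
/- Let h : ℕ → ℕ be a function with h(0) = 0 such that the increment h'(n) = h(n) − h(n−1) is nondecreasing. If f(2^m) ≤ h'(2^m) ≤ 2^{2m+3}·f(2^{m+1}) for all m, where f is nondecreasing, then f(n) ≤ h(2n) and h(n) ≤ 64·n^3·f(4n) for all n ≥ 1. -/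
theorem stmt_9 (f h h' : ℕ → ℕ) (hfmono : Monotone f)
    (h0 : h 0 = 0)
    (hh' : ∀ n, 1 ≤ n → h' n = h n - h (n - 1))
    (hmono : Monotone h')
    (hbound : ∀ m : ℕ, f (2 ^ m) ≤ h' (2 ^ m) ∧
      h' (2 ^ m) ≤ 2 ^ (2 * m + 3) * f (2 ^ (m + 1))) :
    ∀ n : ℕ, 1 ≤ n → f n ≤ h (2 * n) ∧ h n ≤ 64 * n ^ 3 * f (4 * n) := by
  have hA : ∀ b a, 1 ≤ a → a ≤ b → h' a ≤ h b := by
    intro b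
    induction b with
    | zero => intro a ha hab; omega
    | succ b ih =>
      intro a ha hab
      rcases Nat.lt_or_ge (h (b + 1)) (h b) with hlt | hge
      · have hz : h' (b + 1) = 0 := by
          rw [hh' (b + 1) (by omega)]
          simp only [Nat.add_sub_cancel]
          omega
        have := hmono hab
        omega
      · rcases Nat.eq_or_lt_of_le hab with heq | hlt2
        · rw [heq, hh' (b + 1) (by omega)]
          simp only [Nat.add_sub_cancel]
          omega
        · have := ih a ha (by omega)
          have hb1 : h' (b + 1) = h (b + 1) - h b := by
            rw [hh' (b + 1) (by omega)]; simp
          omega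
  have hB : ∀ n, 1 ≤ n → ∀ k, k ≤ n → h k ≤ k * h' n := by
    intro n hn k
    induction k with
    | zero => intro _; simp [h0]
    | succ k ih =>
      intro hk
      have h1 : h' (k + 1) = h (k + 1) - h k := by
        rw [hh' (k + 1) (by omega)]; simp
      have h2 : h' (k + 1) ≤ h' n := hmono hk
      have h3 := ih (by omega)
      have h4 : h (k + 1) ≤ k * h' n + h' n := by omega
      calc h (k + 1) ≤ k * h' n + h' n := h4
        _ = (k + 1) * h' n := by ring
  intro n hn
  set m := Nat.log 2 n with hm
  have h2m : 2 ^ m ≤ n := Nat.pow_log_le_self 2 (by omega)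
  have hn2m : n < 2 ^ (m + 1) := Nat.lt_pow_succ_log_self (by norm_num) n
  constructor
  · calc f n ≤ f (2 ^ (m + 1)) := hfmono (le_of_lt hn2m)
      _ ≤ h' (2 ^ (m + 1)) := (hbound (m + 1)).1
      _ ≤ h (2 * n) := hA (2 * n) (2 ^ (m + 1)) Nat.one_le_two_pow
          (by rw [pow_succ]; omega)
  · have hb := (hbound (m + 1)).2
    calc h n ≤ n * h' n := hB n hn n le_rfl
      _ ≤ n * h' (2 ^ (m + 1)) := Nat.mul_le_mul_left n (hmono (le_of_lt hn2m))
      _ ≤ n * (2 ^ (2 * (m + 1) + 3) * f (2 ^ (m + 1 + 1))) :=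
          Nat.mul_le_mul_left n hb
      _ ≤ n * (32 * n ^ 2 * f (4 * n)) := by
          apply Nat.mul_le_mul_left
          apply Nat.mul_le_mul
          · have he : 2 ^ (2 * (m + 1) + 3) = 32 * (2 ^ m) ^ 2 := by ring
            rw [he]
            exact Nat.mul_le_mul_left 32 (Nat.pow_le_pow_left h2m 2)
          · exact hfmono (by rw [pow_succ, pow_succ]; omega)
      _ = 32 * n ^ 3 * f (4 * n) := by ring
      _ ≤ 64 * n ^ 3 * f (4 * n) := by
          apply Nat.mul_le_mul_right
          apply Nat.mul_le_mul_right
          omega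
end

section
/- Let w be a Toeplitz sequence over a finite alphabet: for every n ≥ 1 there exists d ≥ 1 with w_n = w_{n+id} for all i ≥ 1. Then w is uniformly recurrent: for every factor u of w there exists a constant C such that every factor of w of length C contains an occurrence of u. -/
/-- A window of `w` contained in a larger window is an infix of it. -/
lemma win_infix {Sig : Type*} (w : ℕ → Sig) {m p L C : ℕ} (h1 : m ≤ p)
    (h2 : p + L ≤ m + C) :
    (List.ofFn fun i : Fin L => w (p + i)) <:+:
      (List.ofFn fun i : Fin C => w (m + i)) := by
  have key : ((List.ofFn fun i : Fin C => w (m + i)).drop (p - m)).take L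
      = List.ofFn fun i : Fin L => w (p + i) := by
    apply List.ext_getElem
    · simp; omega
    · intro i hi hi'
      simp only [List.getElem_take, List.getElem_drop, List.getElem_ofFn]
      congr 1
      omega
  exact key ▸ ((List.take_prefix _ _).isInfix.trans
    (List.drop_suffix _ _).isInfix)

theorem stmt_14 (Sig : Type*) [Fintype Sig] (w : ℕ → Sig)
    (htoeplitz : ∀ n : ℕ, ∃ d : ℕ, 0 < d ∧ ∀ i : ℕ, w n = w (n + i * d)) :
    ∀ u : List Sig,
      (∃ k : ℕ, u = List.ofFn fun i : Fin u.length => w (k + i)) →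
      ∃ C : ℕ, ∀ v : List Sig, v.length = C →
        (∃ k : ℕ, v = List.ofFn fun i : Fin v.length => w (k + i)) →
        u <:+: v := by
  intro u ⟨k, hk⟩
  set L := u.length with hL
  set d : ℕ → ℕ := fun n => (htoeplitz n).choose with hd
  have hdpos : ∀ n, 0 < d n := fun n => (htoeplitz n).choose_spec.1
  have hdspec : ∀ n i, w n = w (n + i * d n) :=
    fun n => (htoeplitz n).choose_spec.2
  obtain ⟨D, hDpos, hper⟩ :
      ∃ D : ℕ, 0 < D ∧ ∀ t : ℕ, ∀ j < L, w (k + j) = w (k + j + t * D) := by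
    refine ⟨∏ j ∈ Finset.range L, d (k + j),
      Finset.prod_pos (fun j _ => hdpos _), ?_⟩
    intro t j hj
    obtain ⟨c, hc⟩ : d (k + j) ∣ ∏ j ∈ Finset.range L, d (k + j) :=
      Finset.dvd_prod_of_mem _ (Finset.mem_range.mpr hj)
    have := hdspec (k + j) (t * c)
    rw [hc]
    convert this using 2
    ring
  refine ⟨k + D + L, fun v hvlen ⟨m, hv⟩ => ?_⟩
  have hv' : v = List.ofFn fun i : Fin (k + D + L) => w (m + i) := by
    apply List.ext_getElem
    · simpa using hvlen
    · intro i hi hi'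
      rw [List.getElem_of_eq hv hi, List.getElem_ofFn, List.getElem_ofFn]
  set t : ℕ := (m - k) / D + 1 with ht
  set p : ℕ := k + t * D with hp
  have hq := Nat.div_add_mod (m - k) D
  have hr : (m - k) % D < D := Nat.mod_lt _ hDpos
  have hA : m - k < t * D := by
    rw [ht, add_mul, one_mul, mul_comm]
    omega
  have hB : t * D ≤ (m - k) + D := by
    rw [ht, add_mul, one_mul, mul_comm]
    omega
  have h1 : m ≤ p := by rw [hp]; omega
  have h2 : p + L ≤ m + (k + D + L) := by rw [hp]; omega
  have hu' : u = List.ofFn fun i : Fin L => w (p + i) := by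
    rw [hk]
    apply List.ext_getElem
    · simp [hL]
    · intro i hi hi'
      simp only [List.getElem_ofFn]
      have := hper t i (by simpa using hi)
      rw [show p + i = k + i + t * D by omega] at *
      exact this
  rw [hu', hv']
  exact win_infix w h1 h2
end
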